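/- Let c be an immersed closed curve, λ₀ > 0 a real number, and A a direction with ⟨A(θ), c'(θ)⟩ = 0 for all θ. Assume 3λ₀ + ⟨A, c⟩_{L²} ≠ 0. Then for every direction h: Ω^λ(h,k) = 0 for every direction k if and only if c'(θ) × h(θ) = 0 for all θ. Thus the kernel of the conformal presymplectic form Ω^λ at c consists exactly of the vertical vectors a·c', so Ω^λ induces a weakly non-degenerate (symplectic) form on the space of unparametrized curves. -/

import Mathlib

noncomputable section

open Real

/-- Points of `ℝ³`. -/
abbrev V3 := Fin 3 → ℝ

/-- Euclidean inner product on `ℝ³`. -/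
def dot3 (u v : V3) : ℝ := u 0 * v 0 + u 1 * v 1 + u 2 * v 2

/-- Cross product on `ℝ³`. -/
def cross3 (u v : V3) : V3 :=
  ![u 1 * v 2 - u 2 * v 1, u 2 * v 0 - u 0 * v 2, u 0 * v 1 - u 1 * v 0]

/-- Euclidean norm on `ℝ³`. -/
def norm3 (u : V3) : ℝ := Real.sqrt (dot3 u u)

/-- A closed curve: a smooth `2π`-periodic map `ℝ → ℝ³`. -/
def IsClosedCurve (c : ℝ → V3) : Prop :=
  ContDiff ℝ (⊤ : ℕ∞) c ∧ ∀ θ, c (θ + 2 * π) = c θ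

/-- An immersed closed curve: `c'(θ) ≠ 0` for all `θ`. -/
def IsImmersed (c : ℝ → V3) : Prop :=
  IsClosedCurve c ∧ ∀ θ, deriv c θ ≠ 0

/-- A direction (tangent vector): a smooth `2π`-periodic map `ℝ → ℝ³`. -/
def IsDirection (h : ℝ → V3) : Prop :=
  ContDiff ℝ (⊤ : ℕ∞) h ∧ ∀ θ, h (θ + 2 * π) = h θ

/-- Arc-length derivative along `c`: `D_s h = h'/|c'|`. -/
def Ds (c h : ℝ → V3) : ℝ → V3 := fun θ => (norm3 (deriv c θ))⁻¹ • deriv h θ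

/-- The unit tangent `T = D_s c = c'/|c'|`. -/
def unitT (c : ℝ → V3) : ℝ → V3 := Ds c c

/-- `D_s² c = D_s (D_s c)`. -/
def Ds2c (c : ℝ → V3) : ℝ → V3 := Ds c (Ds c c)

/-- Arc-length integral `∫ f ds = ∫₀^{2π} f(θ) |c'(θ)| dθ`. -/
def arcInt (c : ℝ → V3) (f : ℝ → ℝ) : ℝ :=
  ∫ θ in (0:ℝ)..(2 * π), f θ * norm3 (deriv c θ)

/-- `L²(ds)` pairing `⟨f,g⟩_{L²} = ∫ ⟨f,g⟩ ds`. -/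
def L2 (c f g : ℝ → V3) : ℝ := arcInt c (fun θ => dot3 (f θ) (g θ))

/-- Length `ℓ_c = ∫₀^{2π} |c'(θ)| dθ`. -/
def curveLen (c : ℝ → V3) : ℝ := ∫ θ in (0:ℝ)..(2 * π), norm3 (deriv c θ)

/-- The Liouville one-form for `L = id`: `Θ(c,h) = ∫₀^{2π} ⟨c × c', h⟩ dθ`. -/
def Theta (c h : ℝ → V3) : ℝ :=
  ∫ θ in (0:ℝ)..(2 * π), dot3 (cross3 (c θ) (deriv c θ)) (h θ)

/-- The squared curvature `κ² = |D_s² c|²`. -/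
def kappaSq (c : ℝ → V3) (θ : ℝ) : ℝ := dot3 (Ds2c c θ) (Ds2c c θ)

/-- The conformal presymplectic form at `c`, where `lam0` is the value of the conformal
factor `λ` at `c` and `A` is its `L²(ds)`-gradient at `c`:
`Ω^λ(h,k) = 3λ₀ ∫₀^{2π} ⟨c'×h, k⟩ dθ + Θ(c,h)·⟨A,k⟩_{L²} − Θ(c,k)·⟨A,h⟩_{L²}`. -/
def OmegaConf (c : ℝ → V3) (lam0 : ℝ) (A : ℝ → V3) (h k : ℝ → V3) : ℝ :=
  3 * lam0 * (∫ θ in (0:ℝ)..(2 * π), dot3 (cross3 (deriv c θ) (h θ)) (k θ))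
    + Theta c h * L2 c A k - Theta c k * L2 c A h


/-! ### Auxiliary lemmas -/

lemma dot3_self_nonneg (v : V3) : 0 ≤ dot3 v v := by
  have : dot3 v v = v 0 ^ 2 + v 1 ^ 2 + v 2 ^ 2 := by simp [dot3]; ring
  rw [this]; positivity

lemma eq_zero_of_dot3_self {v : V3} (h : dot3 v v = 0) : v = 0 := by
  simp only [dot3] at h
  have h0 : v 0 = 0 := by nlinarith [sq_nonneg (v 0), sq_nonneg (v 1), sq_nonneg (v 2)]
  have h1 : v 1 = 0 := by nlinarith [sq_nonneg (v 0), sq_nonneg (v 1), sq_nonneg (v 2)]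
  have h2 : v 2 = 0 := by nlinarith [sq_nonneg (v 0), sq_nonneg (v 1), sq_nonneg (v 2)]
  funext i; fin_cases i <;> simpa

lemma cross_key {u v : V3} (hw : cross3 u v = 0) (w : V3) :
    dot3 u u * dot3 w v = dot3 u v * dot3 w u := by
  have e0 := congrFun hw 0
  have e1 := congrFun hw 1
  have e2 := congrFun hw 2
  simp [cross3] at e0 e1 e2
  simp only [dot3]
  linear_combination (w 2 * u 1 - w 1 * u 2) * e0 + (w 0 * u 2 - w 2 * u 0) * e1 +
    (w 1 * u 0 - w 0 * u 1) * e2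

lemma dot3_cross_right (a u : V3) : dot3 (cross3 a u) u = 0 := by
  simp [dot3, cross3]; ring

lemma dot3_cross_left (a u : V3) : dot3 (cross3 a u) a = 0 := by
  simp [dot3, cross3]; ring

lemma contDot {f g : ℝ → V3} (hf : Continuous f) (hg : Continuous g) :
    Continuous fun θ => dot3 (f θ) (g θ) := by unfold dot3; fun_prop

lemma contCross {f g : ℝ → V3} (hf : Continuous f) (hg : Continuous g) :
    Continuous fun θ => cross3 (f θ) (g θ) := by
  apply continuous_pi; intro i; fin_cases i <;> · simp [cross3]; fun_prop

lemma zero_on_Icc_of_integral_zero {f : ℝ → ℝ} (hf : Continuous f) (h0 : ∀ x, 0 ≤ f x)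
    {a b : ℝ} (hab : a < b) (hI : ∫ x in a..b, f x = 0) :
    ∀ x ∈ Set.Icc a b, f x = 0 := by
  intro x₀ hx₀
  by_contra hne
  have hpos : 0 < f x₀ := lt_of_le_of_ne (h0 x₀) (Ne.symm hne)
  obtain ⟨δ, hδ, hball⟩ := Metric.continuousAt_iff.mp hf.continuousAt (f x₀ / 2) (by linarith)
  set u := max a (x₀ - δ/2) with hu
  set v := min b (x₀ + δ/2) with hv
  have hau : a ≤ u := le_max_left _ _
  have hvb : v ≤ b := min_le_left _ _
  have huv : u < v := by
    apply max_lt <;> apply lt_min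
    · exact hab
    · linarith [hx₀.1]
    · linarith [hx₀.2]
    · linarith
  have hlow : ∀ x ∈ Set.Icc u v, f x₀ / 2 ≤ f x := by
    intro x hx
    have h1 : x₀ - δ/2 ≤ x := le_trans (le_max_right _ _) hx.1
    have h2 : x ≤ x₀ + δ/2 := le_trans hx.2 (min_le_right _ _)
    have hd : dist x x₀ < δ := by
      rw [Real.dist_eq, abs_lt]; constructor <;> linarith
    have := hball hd
    rw [Real.dist_eq, abs_lt] at this
    linarith [this.1]
  have hint : ∀ (p q : ℝ), IntervalIntegrable f MeasureTheory.volume p q :=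
    fun p q => hf.intervalIntegrable p q
  have hsplit : (∫ x in a..b, f x) = (∫ x in a..u, f x) + (∫ x in u..v, f x)
      + (∫ x in v..b, f x) := by
    rw [intervalIntegral.integral_add_adjacent_intervals (hint a u) (hint u v),
      intervalIntegral.integral_add_adjacent_intervals (hint a v) (hint v b)]
  have h1 : 0 ≤ ∫ x in a..u, f x := intervalIntegral.integral_nonneg hau (fun x _ => h0 x)
  have h3 : 0 ≤ ∫ x in v..b, f x := intervalIntegral.integral_nonneg hvb (fun x _ => h0 x)
  have h2 : (v - u) * (f x₀ / 2) ≤ ∫ x in u..v, f x := by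
    have := intervalIntegral.integral_mono_on (μ := MeasureTheory.volume)
      (f := fun _ => f x₀ / 2) (g := f) huv.le
      (intervalIntegrable_const) (hint u v) hlow
    rw [intervalIntegral.integral_const, smul_eq_mul] at this; linarith [this]
  have hfin : 0 < (v - u) * (f x₀ / 2) := by apply mul_pos <;> linarith
  linarith [hsplit ▸ hI]

/-- in the non-scale-invariant case, the kernel of `Ω^λ` at `c` consists
exactly of the vertical vectors. -/
theorem conformal_kernel_nondegenerate (c : ℝ → V3) (lam0 : ℝ) (A : ℝ → V3)
    (hc : IsImmersed c) (hlam0 : 0 < lam0) (hA : IsDirection A)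
    (hAt : ∀ θ, dot3 (A θ) (deriv c θ) = 0)
    (hne : 3 * lam0 + L2 c A c ≠ 0) :
    ∀ h, IsDirection h →
      ((∀ k, IsDirection k → OmegaConf c lam0 A h k = 0) ↔
        ∀ θ, cross3 (deriv c θ) (h θ) = 0) := by
  obtain ⟨⟨hcs, hcp⟩, hcimm⟩ := hc
  obtain ⟨hAs, hAp⟩ := hA
  have hπ : (0:ℝ) < 2 * π := by positivity
  have hds : ContDiff ℝ (⊤ : ℕ∞) (deriv c) := by
    have h1 : ContDiff ℝ (((⊤ : ℕ∞) : WithTop ℕ∞) + 1) c := by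
      rw [show (((⊤ : ℕ∞) : WithTop ℕ∞) + 1) = ((⊤ : ℕ∞) : WithTop ℕ∞) from rfl]; exact hcs
    exact (contDiff_succ_iff_deriv.mp h1).2.2
  have hdp : ∀ θ, deriv c (θ + 2 * π) = deriv c θ := by
    intro θ
    have hfeq : (fun t => c (t + 2 * π)) = c := funext hcp
    calc deriv c (θ + 2 * π) = deriv (fun t => c (t + 2 * π)) θ :=
          (deriv_comp_add_const c (2 * π) θ).symm
      _ = deriv c θ := by rw [hfeq]
  have hCc : Continuous c := hcs.continuous
  have hCd : Continuous (deriv c) := hds.continuous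
  have hCA : Continuous A := hAs.continuous
  have hCn : Continuous fun θ => norm3 (deriv c θ) :=
    Real.continuous_sqrt.comp (contDot hCd hCd)
  have huu : ∀ θ, dot3 (deriv c θ) (deriv c θ) ≠ 0 :=
    fun θ hz => hcimm θ (eq_zero_of_dot3_self hz)
  intro h hh
  have hCh : Continuous h := hh.1.continuous
  constructor
  · -- forward direction
    intro hker
    set μ := L2 c A h with hμ
    -- Step A : Theta c h = 0
    have hOc := hker c ⟨hcs, hcp⟩
    have hTcc : Theta c c = 0 := by
      unfold Theta
      rw [intervalIntegral.integral_congr (g := fun _ => (0:ℝ))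
        (fun θ _ => dot3_cross_left (c θ) (deriv c θ))]
      simp
    have hI1 : (∫ θ in (0:ℝ)..(2 * π), dot3 (cross3 (deriv c θ) (h θ)) (c θ)) = Theta c h := by
      unfold Theta
      apply intervalIntegral.integral_congr
      intro θ _
      simp [dot3, cross3]; ring
    have hTh : Theta c h = 0 := by
      unfold OmegaConf at hOc
      rw [hI1, hTcc] at hOc
      have h2 : Theta c h * (3 * lam0 + L2 c A c) = 0 := by linear_combination hOc
      exact (mul_eq_zero.mp h2).resolve_right hne
    -- define q and G
    set q : ℝ → V3 := fun θ i => 3 * lam0 * h θ i + μ * c θ i with hq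
    set G : ℝ → V3 := fun θ => cross3 (deriv c θ) (q θ) with hG
    have hCq : Continuous q := by
      apply continuous_pi; intro i; fun_prop
    have hCG : Continuous G := contCross hCd hCq
    have hGdir : IsDirection G := by
      constructor
      · apply contDiff_pi.mpr; intro i
        have hhs := hh.1
        fin_cases i <;> · simp only [hG, hq, cross3]; simp; fun_prop
      · intro θ
        have hqper : q (θ + 2 * π) = q θ := by
          funext i; simp only [hq, hcp θ, hh.2 θ]
        simp only [hG, hqper, hdp θ]
    have hOG := hker G hGdir
    -- rewrite Ω(h,G) into ∫ ⟨G,G⟩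
    have hf1 : Continuous fun θ => dot3 (cross3 (deriv c θ) (h θ)) (G θ) :=
      contDot (contCross hCd hCh) hCG
    have hf2 : Continuous fun θ => dot3 (cross3 (c θ) (deriv c θ)) (G θ) :=
      contDot (contCross hCc hCd) hCG
    have e1 : (∫ θ in (0:ℝ)..(2 * π), dot3 (G θ) (G θ)) =
        3 * lam0 * (∫ θ in (0:ℝ)..(2 * π), dot3 (cross3 (deriv c θ) (h θ)) (G θ))
        - μ * (∫ θ in (0:ℝ)..(2 * π), dot3 (cross3 (c θ) (deriv c θ)) (G θ)) := by
      rw [← intervalIntegral.integral_const_mul, ← intervalIntegral.integral_const_mul,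
        ← intervalIntegral.integral_sub ((hf1.intervalIntegrable _ _).const_mul _)
          ((hf2.intervalIntegrable _ _).const_mul _)]
      apply intervalIntegral.integral_congr
      intro θ _
      simp only [hG, hq, dot3, cross3]
      simp
      ring
    have hOG' : (∫ θ in (0:ℝ)..(2 * π), dot3 (G θ) (G θ)) = 0 := by
      unfold OmegaConf at hOG
      rw [hTh] at hOG
      unfold Theta at hOG
      rw [e1]
      linarith [hOG]
    -- G vanishes identically
    have hzero := zero_on_Icc_of_integral_zero (contDot hCG hCG)
      (fun x => dot3_self_nonneg _) hπ hOG'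
    have hGper : Function.Periodic (fun θ => dot3 (G θ) (G θ)) (2 * π) := by
      intro θ
      have hqper : q (θ + 2 * π) = q θ := by
        funext i; simp only [hq, hcp θ, hh.2 θ]
      simp only [hG, hqper, hdp θ]
    have hGzero : ∀ θ, G θ = 0 := by
      intro θ
      obtain ⟨y, hy, hxy⟩ := hGper.exists_mem_Ico₀ hπ θ
      apply eq_zero_of_dot3_self
      calc dot3 (G θ) (G θ) = dot3 (G y) (G y) := hxy
        _ = 0 := hzero y ⟨hy.1, hy.2.le⟩
    -- pointwise ⟨A, q⟩ = 0
    have hAq : ∀ θ, dot3 (A θ) (q θ) = 0 := by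
      intro θ
      have hck := cross_key (hGzero θ) (A θ)
      rw [hAt θ, mul_zero] at hck
      exact (mul_eq_zero.mp hck).resolve_left (huu θ)
    -- integrate to get μ = 0
    have hμ0 : μ = 0 := by
      have e : ∀ θ, 3 * lam0 * (dot3 (A θ) (h θ) * norm3 (deriv c θ))
          = (-μ) * (dot3 (A θ) (c θ) * norm3 (deriv c θ)) := by
        intro θ
        have hexp : dot3 (A θ) (q θ)
            = 3 * lam0 * dot3 (A θ) (h θ) + μ * dot3 (A θ) (c θ) := by
          simp only [hq, dot3]; ring
        have h' : 3 * lam0 * dot3 (A θ) (h θ) + μ * dot3 (A θ) (c θ) = 0 := by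
          rw [← hexp]; exact hAq θ
        linear_combination norm3 (deriv c θ) * h'
      have hcalc : 3 * lam0 * μ = (-μ) * L2 c A c := by
        calc 3 * lam0 * μ
            = ∫ θ in (0:ℝ)..(2 * π), 3 * lam0 * (dot3 (A θ) (h θ) * norm3 (deriv c θ)) := by
              rw [intervalIntegral.integral_const_mul]; rfl
          _ = ∫ θ in (0:ℝ)..(2 * π), (-μ) * (dot3 (A θ) (c θ) * norm3 (deriv c θ)) :=
              intervalIntegral.integral_congr (fun θ _ => e θ)
          _ = (-μ) * L2 c A c := by
              rw [intervalIntegral.integral_const_mul]; rfl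
      have hm : μ * (3 * lam0 + L2 c A c) = 0 := by linear_combination hcalc
      exact (mul_eq_zero.mp hm).resolve_right hne
    -- conclude cross3 (c' θ) (h θ) = 0
    intro θ
    have h3 : (3:ℝ) * lam0 ≠ 0 := by positivity
    funext i
    have ei := congrFun (hGzero θ) i
    simp only [hG] at ei
    fin_cases i <;>
    · simp only [cross3, hq, hμ0] at ei ⊢
      simp at ei ⊢
      apply mul_left_cancel₀ h3
      linear_combination ei
  · -- reverse direction
    intro hcr k hk
    have hAh : ∀ θ, dot3 (A θ) (h θ) = 0 := by
      intro θ
      have hck := cross_key (hcr θ) (A θ)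
      rw [hAt θ, mul_zero] at hck
      exact (mul_eq_zero.mp hck).resolve_left (huu θ)
    have hThz : Theta c h = 0 := by
      unfold Theta
      rw [intervalIntegral.integral_congr (g := fun _ => (0:ℝ)) ?_]
      · simp
      intro θ _
      have hck := cross_key (hcr θ) (cross3 (c θ) (deriv c θ))
      rw [dot3_cross_right, mul_zero] at hck
      exact (mul_eq_zero.mp hck).resolve_left (huu θ)
    have hL2z : L2 c A h = 0 := by
      unfold L2 arcInt
      rw [intervalIntegral.integral_congr (g := fun _ => (0:ℝ)) ?_]
      · simp
      intro θ _
      show dot3 (A θ) (h θ) * norm3 (deriv c θ) = 0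
      rw [hAh θ, zero_mul]
    have hIz : (∫ θ in (0:ℝ)..(2 * π), dot3 (cross3 (deriv c θ) (h θ)) (k θ)) = 0 := by
      rw [intervalIntegral.integral_congr (g := fun _ => (0:ℝ)) ?_]
      · simp
      intro θ _
      show dot3 (cross3 (deriv c θ) (h θ)) (k θ) = 0
      rw [hcr θ]
      simp [dot3]
    unfold OmegaConf
    rw [hIz, hThz, hL2z]
    ring
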